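/- arXiv:2207.14690 — 8 statements merged into one kernel-verified Lean document; each statement's English description precedes it below -/
import Mathlib

section
/- For every deterministic online policy P (i.e., a policy whose state in slot t+1 is a deterministic function of the arrivals in slots 1 through t) there exists a finite arrival sequence a such that C^P(a) / C^OPT-OFF(a) ≥ min{ (Δκ + c_L)/c_H, c_H/c_L, (Δκ + c_L + c_H + W)/(c_H + c_L + W) }; hence the competitive ratio of any deterministic online policy is at least this minimum. -/
open Finset

noncomputable section

/-! Edge-renting model.  The state of the edge server in a slot is a `Bool`:
`true` = state `H` (high computation power), `false` = state `L` (low). -/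

/-- Rent cost per slot: `cH` in state `H`, `cL` in state `L`. -/
def rentCost (cH cL : ℝ) (s : Bool) : ℝ := if s then cH else cL

/-- Serving capacity of the edge server: `kH` in state `H`, `kL` in state `L`. -/
def capac (kH kL : ℝ) (s : Bool) : ℝ := if s then kH else kL

/-- Switch cost incurred between two consecutive slots with states `a` then `b`:
`W_HL` for `H → L`, `W_LH` for `L → H`, `0` if the state is unchanged. -/
def switchCost (WLH WHL : ℝ) (a b : Bool) : ℝ :=
  if a = b then 0 else if a then WHL else WLH

/-- Rent plus service cost incurred in slot `t` by the state sequence `r`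
on the arrival sequence `x`. -/
def slotCost (cH cL kH kL : ℝ) (x : ℕ → ℝ) (r : ℕ → Bool) (t : ℕ) : ℝ :=
  rentCost cH cL (r t) + (x t - min (x t) (capac kH kL (r t)))

/-- Total cost incurred by the state sequence `r` over slots `1, …, T`
(rent + service costs of every slot, plus the switch costs between consecutive slots). -/
def totalCost (cH cL kH kL WLH WHL : ℝ) (x : ℕ → ℝ) (r : ℕ → Bool) (T : ℕ) : ℝ :=
  (∑ t ∈ Finset.Icc 1 T, slotCost cH cL kH kL x r t) +
    ∑ t ∈ Finset.Icc 1 (T - 1), switchCost WLH WHL (r t) (r (t + 1))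

/-- `r` is an offline-optimal state sequence (OPT-OFF) for arrivals `x` and horizon `T`. -/
def IsOptOff (cH cL kH kL WLH WHL : ℝ) (x : ℕ → ℝ) (T : ℕ) (r : ℕ → Bool) : Prop :=
  ∀ r' : ℕ → Bool,
    totalCost cH cL kH kL WLH WHL x r T ≤ totalCost cH cL kH kL WLH WHL x r' T

/-- `Σ_{l=n}^{m} (x̄_{l,H} − x̄_{l,L})`, the gap in the number of requests servable
at the edge between states `H` and `L` over slots `n, …, m`. -/
def servedGap (kH kL : ℝ) (x : ℕ → ℝ) (n m : ℕ) : ℝ :=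
  ∑ l ∈ Finset.Icc n m, (min (x l) kH - min (x l) kL)

open scoped Classical in
/-- The BLTN policy: `(bltn cH cL kH kL W x t).1` is its state in slot `t`
(`t ≥ 1`; it starts in state `L`), and `(bltn cH cL kH kL W x t).2` is the value of
`t_switch` (the last slot at whose end a switch occurred, initially `0`).
At the end of slot `t`, in state `H` it switches to `L` iff there is `τ` with
`t_switch < τ ≤ t` and `Σ_{l=τ}^t (x̄_{l,H} − x̄_{l,L}) ≤ (t−τ+1)(cH−cL) − W`, and
in state `L` it switches to `H` iff there is `τ` with `t_switch < τ ≤ t` and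
`Σ_{l=τ}^t (x̄_{l,H} − x̄_{l,L}) ≥ (t−τ+1)(cH−cL) + W`. -/
def bltn (cH cL kH kL W : ℝ) (x : ℕ → ℝ) : ℕ → Bool × ℕ
  | 0 => (false, 0)
  | t + 1 =>
    let p := bltn cH cL kH kL W x t
    if p.1 then
      if ∃ τ, p.2 < τ ∧ τ ≤ t ∧
          servedGap kH kL x τ t ≤ ((t - τ + 1 : ℕ) : ℝ) * (cH - cL) - W then
        (false, t)
      else (true, p.2)
    else
      if ∃ τ, p.2 < τ ∧ τ ≤ t ∧
          ((t - τ + 1 : ℕ) : ℝ) * (cH - cL) + W ≤ servedGap kH kL x τ t then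
        (true, t)
      else (false, p.2)

/-- The state of the BLTN policy in slot `t`. -/
def rBLTN (cH cL kH kL W : ℝ) (x : ℕ → ℝ) (t : ℕ) : Bool :=
  (bltn cH cL kH kL W x t).1


/-- Theorem 1(b): for every deterministic online policy `P`
(its state in slot `t+1` is a deterministic, causal function of the arrivals in
slots `1, …, t`) there is a finite arrival sequence on which the cost of `P` is at least
`min{(Δκ + cL)/cH, cH/cL, (Δκ + cL + cH + W)/(cH + cL + W)}` times the offline optimal
cost; hence the competitive ratio of any deterministic online policy is at least
this minimum. -/
theorem deterministic_online_lower_bound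
    (cH cL kH kL WLH WHL : ℝ)
    (hcL : 0 < cL) (hc : cL < cH) (hkL : 0 < kL) (hk : kL < kH)
    (hWLH : 0 < WLH) (hWHL : 0 < WHL) (hkc : cH - cL < kH - kL)
    (P : (ℕ → ℝ) → ℕ → Bool)
    (hP : ∀ x y : ℕ → ℝ, ∀ t : ℕ,
      (∀ s, 1 ≤ s → s ≤ t → x s = y s) → P x (t + 1) = P y (t + 1)) :
    ∃ (x : ℕ → ℝ) (T : ℕ), (∀ t, 0 ≤ x t) ∧ 1 ≤ T ∧
      ∀ rOpt : ℕ → Bool, IsOptOff cH cL kH kL WLH WHL x T rOpt →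
        min (min (((kH - kL) + cL) / cH) (cH / cL))
            (((kH - kL) + cL + cH + (WLH + WHL)) / (cH + cL + (WLH + WHL))) *
          totalCost cH cL kH kL WLH WHL x rOpt T ≤
        totalCost cH cL kH kL WLH WHL x (P x) T := by
  have hcH : (0:ℝ) < cH := hcL.trans hc
  have hkH : (0:ℝ) < kH := hkL.trans hk
  have h1 : ∀ x y : ℕ → ℝ, P x 1 = P y 1 := fun x y =>
    hP x y 0 (fun s hs hs0 => absurd (hs.trans hs0) (by norm_num))
  set M := min (min (((kH - kL) + cL) / cH) (cH / cL))
      (((kH - kL) + cL + cH + (WLH + WHL)) / (cH + cL + (WLH + WHL))) with hM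
  have hT1 : ∀ (x : ℕ → ℝ) (r : ℕ → Bool), totalCost cH cL kH kL WLH WHL x r 1
      = rentCost cH cL (r 1) + (x 1 - min (x 1) (capac kH kL (r 1))) := by
    intro x r
    simp [totalCost, slotCost, show (1:ℕ)-1 = 0 from rfl,
      Finset.Icc_eq_empty (show ¬(1:ℕ) ≤ 0 by norm_num), Finset.Icc_self]
  by_cases hcase : P (fun _ => 0) 1 = true
  · -- adversary sends zero arrivals
    refine ⟨fun _ => 0, 1, fun t => le_rfl, le_rfl, ?_⟩
    intro rOpt hOpt
    have hPcost : totalCost cH cL kH kL WLH WHL (fun _ => 0) (P (fun _ => 0)) 1 = cH := by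
      rw [hT1]; simp [hcase, rentCost, capac, min_eq_left hkH.le]
    have hub : totalCost cH cL kH kL WLH WHL (fun _ => 0) rOpt 1 ≤ cL := by
      have h := hOpt (fun _ => false)
      rw [hT1 _ (fun _ => false)] at h
      simpa [rentCost, capac, min_eq_left hkL.le] using h
    have hlb : 0 ≤ totalCost cH cL kH kL WLH WHL (fun _ => 0) rOpt 1 := by
      rw [hT1]
      cases h : rOpt 1 <;>
        simp [rentCost, capac, min_eq_left hkL.le, min_eq_left hkH.le, hcL.le, hcH.le]
    rw [hPcost]
    calc M * totalCost cH cL kH kL WLH WHL (fun _ => 0) rOpt 1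
        ≤ (cH / cL) * totalCost cH cL kH kL WLH WHL (fun _ => 0) rOpt 1 :=
          mul_le_mul_of_nonneg_right
            (le_trans (min_le_left _ _) (min_le_right _ _)) hlb
      _ ≤ (cH / cL) * cL := mul_le_mul_of_nonneg_left hub (by positivity)
      _ = cH := by field_simp
  · -- P starts in L; adversary sends kH in every slot
    have hfalse : P (fun _ => (kH:ℝ)) 1 = false := by
      rw [← h1 (fun _ => (0:ℝ))]
      exact Bool.eq_false_iff.mpr (fun h => hcase h)
    refine ⟨fun _ => kH, 1, fun t => hkH.le, le_rfl, ?_⟩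
    intro rOpt hOpt
    have hPcost : totalCost cH cL kH kL WLH WHL (fun _ => kH) (P (fun _ => kH)) 1
        = cL + (kH - kL) := by
      rw [hT1]; simp [hfalse, rentCost, capac, min_eq_right hk.le]
    have hub : totalCost cH cL kH kL WLH WHL (fun _ => kH) rOpt 1 ≤ cH := by
      have h := hOpt (fun _ => true)
      rw [hT1 _ (fun _ => true)] at h
      simpa [rentCost, capac] using h
    have hlb : 0 ≤ totalCost cH cL kH kL WLH WHL (fun _ => kH) rOpt 1 := by
      rw [hT1]
      cases h : rOpt 1 <;>
        simp [rentCost, capac, min_eq_right hk.le] <;> nlinarith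
    rw [hPcost]
    have hnn : (0:ℝ) ≤ ((kH - kL) + cL) / cH :=
      div_nonneg (by linarith) hcH.le
    calc M * totalCost cH cL kH kL WLH WHL (fun _ => kH) rOpt 1
        ≤ (((kH - kL) + cL) / cH) * totalCost cH cL kH kL WLH WHL (fun _ => kH) rOpt 1 :=
          mul_le_mul_of_nonneg_right
            (le_trans (min_le_left _ _) (min_le_left _ _)) hlb
      _ ≤ (((kH - kL) + cL) / cH) * cH := mul_le_mul_of_nonneg_left hub hnn
      _ = cL + (kH - kL) := by field_simp; ring
end
end

section
/- (OPT-OFF hosting interval in H) If the offline optimal policy satisfies r*(n−1) = L, r*(t) = H for all n ≤ t ≤ m, and r*(m+1) = L, then Σ_{l=n}^m (x̄_{l,H} − x̄_{l,L}) ≥ W + (m − n + 1)(c_H − c_L). -/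
open Finset

noncomputable section

/-- OPT-OFF hosting interval in H: if the offline optimal policy is in
`L` in slot `n−1`, in `H` in slots `n, …, m`, and in `L` in slot `m+1`, then
`Σ_{l=n}^m (x̄_{l,H} − x̄_{l,L}) ≥ W + (m − n + 1)(cH − cL)`. -/
theorem optoff_H_interval_gap_lower
    (cH cL kH kL WLH WHL : ℝ)
    (hcL : 0 < cL) (hc : cL < cH) (hkL : 0 < kL) (hk : kL < kH)
    (hWLH : 0 < WLH) (hWHL : 0 < WHL) (hkc : cH - cL < kH - kL)
    (x : ℕ → ℝ) (hx : ∀ t, 0 ≤ x t) (T : ℕ)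
    (rstar : ℕ → Bool) (hOpt : IsOptOff cH cL kH kL WLH WHL x T rstar)
    (n m : ℕ) (hn : 2 ≤ n) (hnm : n ≤ m) (hmT : m + 1 ≤ T)
    (h1 : rstar (n - 1) = false)
    (h2 : ∀ t, n ≤ t → t ≤ m → rstar t = true)
    (h3 : rstar (m + 1) = false) :
    (WLH + WHL) + ((m - n + 1 : ℕ) : ℝ) * (cH - cL) ≤ servedGap kH kL x n m := by
  classical
  set r' : ℕ → Bool := fun t => if n ≤ t ∧ t ≤ m then false else rstar t with hr'def
  have hr'in : ∀ t, n ≤ t → t ≤ m → r' t = false := by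
    intro t ha hb; simp [hr'def, ha, hb]
  have hr'out : ∀ t, ¬ (n ≤ t ∧ t ≤ m) → r' t = rstar t := by
    intro t ht; simp only [hr'def]; rw [if_neg ht]
  have hopt := hOpt r'
  have hsub : Finset.Icc n m ⊆ Finset.Icc 1 T := by
    intro t ht; simp only [Finset.mem_Icc] at ht ⊢; omega
  have hA : (∑ t ∈ Finset.Icc 1 T, slotCost cH cL kH kL x rstar t)
      - (∑ t ∈ Finset.Icc 1 T, slotCost cH cL kH kL x r' t)
      = ∑ l ∈ Finset.Icc n m, ((cH - cL) - (min (x l) kH - min (x l) kL)) := by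
    rw [← Finset.sum_sub_distrib]
    rw [← Finset.sum_subset hsub (by
      intro t ht hnt
      simp only [Finset.mem_Icc] at hnt
      have : r' t = rstar t := hr'out t (by omega)
      simp [slotCost, this])]
    apply Finset.sum_congr rfl
    intro l hl
    simp only [Finset.mem_Icc] at hl
    have e1 : rstar l = true := h2 l hl.1 hl.2
    have e2 : r' l = false := hr'in l hl.1 hl.2
    simp only [slotCost, rentCost, capac, e1, e2]
    norm_num
    ring
  have hn1m : n - 1 ≠ m := by omega
  have hsub2 : ({n - 1, m} : Finset ℕ) ⊆ Finset.Icc 1 (T - 1) := by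
    intro t ht
    simp only [Finset.mem_insert, Finset.mem_singleton] at ht
    simp only [Finset.mem_Icc]; omega
  have hB : (∑ t ∈ Finset.Icc 1 (T - 1), switchCost WLH WHL (rstar t) (rstar (t + 1)))
      - (∑ t ∈ Finset.Icc 1 (T - 1), switchCost WLH WHL (r' t) (r' (t + 1)))
      = WLH + WHL := by
    rw [← Finset.sum_sub_distrib]
    rw [← Finset.sum_subset hsub2 (by
      intro t ht hnt
      simp only [Finset.mem_Icc] at ht
      simp only [Finset.mem_insert, Finset.mem_singleton, not_or] at hnt
      by_cases hc1 : n ≤ t ∧ t ≤ m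
      · have hc2 : n ≤ t + 1 ∧ t + 1 ≤ m := ⟨by omega, by omega⟩
        rw [hr'in t hc1.1 hc1.2, hr'in (t + 1) hc2.1 hc2.2,
          h2 t hc1.1 hc1.2, h2 (t + 1) hc2.1 hc2.2]
        simp [switchCost]
      · by_cases hc2 : n ≤ t + 1 ∧ t + 1 ≤ m
        · exfalso; omega
        · rw [hr'out t hc1, hr'out (t + 1) hc2]; ring)]
    rw [Finset.sum_pair hn1m]
    have en1 : n - 1 + 1 = n := by omega
    have ea : rstar (n - 1) = false := h1
    have eb : rstar n = true := h2 n le_rfl hnm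
    have ec : rstar m = true := h2 m hnm le_rfl
    have ed : r' (n - 1) = false := by
      rw [hr'out (n - 1) (by omega)]; exact h1
    have ee : r' n = false := hr'in n le_rfl hnm
    have ef : r' m = false := hr'in m hnm le_rfl
    have eg : r' (m + 1) = false := by
      rw [hr'out (m + 1) (by omega)]; exact h3
    rw [en1, ea, eb, ec, h3, ed, ee, ef, eg]
    simp [switchCost]
  have hsum : ∑ l ∈ Finset.Icc n m, ((cH - cL) - (min (x l) kH - min (x l) kL))
      = ((m - n + 1 : ℕ) : ℝ) * (cH - cL) - servedGap kH kL x n m := by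
    rw [servedGap, Finset.sum_sub_distrib, Finset.sum_const, nsmul_eq_mul, Nat.card_Icc]
    have : m + 1 - n = m - n + 1 := by omega
    rw [this]
  rw [hsum] at hA
  simp only [totalCost] at hopt
  linarith [hA, hB, hopt]
end
end

section
/- (OPT-OFF hosting interval in L) If the offline optimal policy satisfies r*(n−1) = H, r*(t) = L for all n ≤ t ≤ m, and r*(m+1) = H, then Σ_{l=n}^m (x̄_{l,H} − x̄_{l,L}) + W ≤ (m − n + 1)(c_H − c_L). -/
open Finset

noncomputable section

/-- OPT-OFF hosting interval in L: if the offline optimal policy is in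
`H` in slot `n−1`, in `L` in slots `n, …, m`, and in `H` in slot `m+1`, then
`Σ_{l=n}^m (x̄_{l,H} − x̄_{l,L}) + W ≤ (m − n + 1)(cH − cL)`. -/
theorem optoff_L_interval_gap_upper
    (cH cL kH kL WLH WHL : ℝ)
    (hcL : 0 < cL) (hc : cL < cH) (hkL : 0 < kL) (hk : kL < kH)
    (hWLH : 0 < WLH) (hWHL : 0 < WHL) (hkc : cH - cL < kH - kL)
    (x : ℕ → ℝ) (hx : ∀ t, 0 ≤ x t) (T : ℕ)
    (rstar : ℕ → Bool) (hOpt : IsOptOff cH cL kH kL WLH WHL x T rstar)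
    (n m : ℕ) (hn : 2 ≤ n) (hnm : n ≤ m) (hmT : m + 1 ≤ T)
    (h1 : rstar (n - 1) = true)
    (h2 : ∀ t, n ≤ t → t ≤ m → rstar t = false)
    (h3 : rstar (m + 1) = true) :
    servedGap kH kL x n m + (WLH + WHL) ≤ ((m - n + 1 : ℕ) : ℝ) * (cH - cL) := by
  classical
  set r' : ℕ → Bool := fun t => if n ≤ t ∧ t ≤ m then true else rstar t with hr'
  have hr'in : ∀ t, n ≤ t → t ≤ m → r' t = true := by
    intro t ha hb; simp only [hr']; rw [if_pos ⟨ha, hb⟩]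
  have hr'out : ∀ t, t < n ∨ m < t → r' t = rstar t := by
    intro t ht; simp only [hr']; rw [if_neg (by omega)]
  have hle := hOpt r'
  -- slot cost comparison
  have hslot : ∑ t ∈ Finset.Icc 1 T, (slotCost cH cL kH kL x r' t
      - slotCost cH cL kH kL x rstar t)
      = ((m - n + 1 : ℕ) : ℝ) * (cH - cL) - servedGap kH kL x n m := by
    rw [← Finset.sum_subset (Finset.Icc_subset_Icc (by omega) (by omega) :
        Finset.Icc n m ⊆ Finset.Icc 1 T)]
    · have heach : ∀ t ∈ Finset.Icc n m,
          slotCost cH cL kH kL x r' t - slotCost cH cL kH kL x rstar t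
          = (cH - cL) - (min (x t) kH - min (x t) kL) := by
        intro t ht
        rw [Finset.mem_Icc] at ht
        simp only [slotCost, rentCost, capac, hr'in t ht.1 ht.2, h2 t ht.1 ht.2]
        simp only [if_true, Bool.false_eq_true, if_false]
        ring
      rw [Finset.sum_congr rfl heach, Finset.sum_sub_distrib, Finset.sum_const,
        Nat.card_Icc, servedGap]
      have : (m + 1 - n : ℕ) = (m - n + 1 : ℕ) := by omega
      rw [this]
      push_cast
      ring
    · intro t ht hnot
      rw [Finset.mem_Icc] at hnot
      have h1 : r' t = rstar t := hr'out t (by omega)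
      simp only [slotCost]
      rw [h1]; ring
  -- switch cost comparison
  have hsw : ∑ t ∈ Finset.Icc 1 (T - 1), (switchCost WLH WHL (rstar t) (rstar (t + 1))
      - switchCost WLH WHL (r' t) (r' (t + 1))) = WHL + WLH := by
    have hsub : ({n - 1, m} : Finset ℕ) ⊆ Finset.Icc 1 (T - 1) := by
      intro t ht
      simp only [Finset.mem_insert, Finset.mem_singleton] at ht
      rw [Finset.mem_Icc]
      rcases ht with h | h <;> omega
    rw [← Finset.sum_subset hsub]
    · have hne : (n - 1 : ℕ) ∉ ({m} : Finset ℕ) := by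
        simp only [Finset.mem_singleton]; omega
      rw [Finset.sum_insert hne, Finset.sum_singleton]
      have e1 : n - 1 + 1 = n := by omega
      have ra : rstar n = false := h2 n le_rfl hnm
      have rb : rstar m = false := h2 m hnm le_rfl
      have r1 : r' (n - 1) = rstar (n - 1) := hr'out (n - 1) (Or.inl (by omega))
      have r2 : r' n = true := hr'in n le_rfl hnm
      have r3 : r' m = true := hr'in m hnm le_rfl
      have r4 : r' (m + 1) = rstar (m + 1) := hr'out (m + 1) (Or.inr (by omega))
      rw [e1, r1, r2, r3, r4, h1, h3, ra, rb]
      simp [switchCost]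
    · intro t ht hnot
      rw [Finset.mem_Icc] at ht
      simp only [Finset.mem_insert, Finset.mem_singleton] at hnot
      push_neg at hnot
      by_cases hlt : t < n - 1
      · rw [hr'out t (Or.inl (by omega)), hr'out (t + 1) (Or.inl (by omega))]; ring
      · by_cases hgt : m < t
        · rw [hr'out t (Or.inr hgt), hr'out (t + 1) (Or.inr (by omega))]; ring
        · -- n ≤ t ≤ m - 1
          have hta : n ≤ t := by omega
          have htb : t + 1 ≤ m := by omega
          rw [hr'in t hta (by omega), hr'in (t + 1) (by omega) htb,
            h2 t hta (by omega), h2 (t + 1) (by omega) htb]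
          simp [switchCost]
  -- combine
  have key : totalCost cH cL kH kL WLH WHL x r' T
      = totalCost cH cL kH kL WLH WHL x rstar T
        + (((m - n + 1 : ℕ) : ℝ) * (cH - cL) - servedGap kH kL x n m)
        - (WHL + WLH) := by
    unfold totalCost
    rw [Finset.sum_sub_distrib] at hslot hsw
    linarith
  rw [key] at hle
  linarith
end
end

section
/- (Minimum sojourn of OPT-OFF in H) If the offline optimal policy switches to state H at the end of slot n−1 and switches back to state L at the end of slot m (i.e., r*(n−1) = L, r*(t) = H for n ≤ t ≤ m, r*(m+1) = L), then m − n + 1 ≥ W / (Δκ − Δc); that is, once OPT-OFF switches to H, it remains in H for at least W/((κ_H − κ_L) − (c_H − c_L)) slots. -/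
open Finset

noncomputable section

/-- minimum sojourn of OPT-OFF in H: if the offline optimal policy
switches to `H` at the end of slot `n−1` and back to `L` at the end of slot `m`, then it
stays in `H` for at least `W/(Δκ − Δc)` slots, i.e. `m − n + 1 ≥ W/((κH − κL) − (cH − cL))`. -/
theorem optoff_min_sojourn_H
    (cH cL kH kL WLH WHL : ℝ)
    (hcL : 0 < cL) (hc : cL < cH) (hkL : 0 < kL) (hk : kL < kH)
    (hWLH : 0 < WLH) (hWHL : 0 < WHL) (hkc : cH - cL < kH - kL)
    (x : ℕ → ℝ) (hx : ∀ t, 0 ≤ x t) (T : ℕ)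
    (rstar : ℕ → Bool) (hOpt : IsOptOff cH cL kH kL WLH WHL x T rstar)
    (n m : ℕ) (hn : 2 ≤ n) (hnm : n ≤ m) (hmT : m + 1 ≤ T)
    (h1 : rstar (n - 1) = false)
    (h2 : ∀ t, n ≤ t → t ≤ m → rstar t = true)
    (h3 : rstar (m + 1) = false) :
    (WLH + WHL) / ((kH - kL) - (cH - cL)) ≤ ((m - n + 1 : ℕ) : ℝ) := by
  have hd : 0 < (kH - kL) - (cH - cL) := by linarith
  set r' : ℕ → Bool := fun t => if n ≤ t ∧ t ≤ m then false else rstar t with hr'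
  have hr'eq : ∀ t, t < n ∨ m < t → r' t = rstar t := by
    intro t ht; simp only [hr']; rw [if_neg]; omega
  have hr'in : ∀ t, n ≤ t → t ≤ m → r' t = false := by
    intro t h h'; simp only [hr']; rw [if_pos ⟨h, h'⟩]
  have hle := hOpt r'
  -- slot cost difference
  have hslot : ∑ t ∈ Finset.Icc 1 T,
      (slotCost cH cL kH kL x rstar t - slotCost cH cL kH kL x r' t)
      = ∑ t ∈ Finset.Icc n m, ((cH - cL) - (min (x t) kH - min (x t) kL)) := by
    rw [← Finset.sum_subset (Finset.Icc_subset_Icc (by omega : 1 ≤ n) (by omega : m ≤ T))]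
    · apply Finset.sum_congr rfl
      intro t ht
      simp only [Finset.mem_Icc] at ht
      have e1 := h2 t ht.1 ht.2
      have e2 := hr'in t ht.1 ht.2
      simp [slotCost, rentCost, capac, e1, e2]
      ring
    · intro t ht hnt
      simp only [Finset.mem_Icc] at ht hnt
      simp only [slotCost]
      rw [hr'eq t (by omega)]
      ring
  -- switch cost difference
  have hswitch : ∑ t ∈ Finset.Icc 1 (T - 1),
      (switchCost WLH WHL (rstar t) (rstar (t + 1)) - switchCost WLH WHL (r' t) (r' (t + 1)))
      = WLH + WHL := by
    have hsub : ({n - 1, m} : Finset ℕ) ⊆ Finset.Icc 1 (T - 1) := by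
      intro t ht
      simp only [Finset.mem_insert, Finset.mem_singleton] at ht
      simp only [Finset.mem_Icc]
      omega
    rw [← Finset.sum_subset hsub]
    · have hne : (n - 1 : ℕ) ≠ m := by omega
      rw [Finset.sum_insert (by simpa using hne), Finset.sum_singleton]
      have hn1 : n - 1 + 1 = n := by omega
      have en := h2 n le_rfl hnm
      have em := h2 m hnm le_rfl
      have e1 : r' (n - 1) = rstar (n - 1) := hr'eq _ (by omega)
      have e2 : r' n = false := hr'in n le_rfl hnm
      have e3 : r' m = false := hr'in m hnm le_rfl
      have e4 : r' (m + 1) = rstar (m + 1) := hr'eq _ (by omega)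
      rw [hn1, e1, e2, e3, e4, h1, h3, en, em]
      simp [switchCost]
    · intro t ht hnt
      simp only [Finset.mem_Icc] at ht
      simp only [Finset.mem_insert, Finset.mem_singleton, not_or] at hnt
      rcases (by omega : t + 1 < n ∨ (n ≤ t ∧ t + 1 ≤ m) ∨ m < t) with h | ⟨ha, hb⟩ | h
      · rw [hr'eq t (by omega), hr'eq (t + 1) (by omega)]; ring
      · have e1 := h2 t ha (by omega)
        have e2 := h2 (t + 1) (by omega) hb
        have e3 := hr'in t ha (by omega)
        have e4 := hr'in (t + 1) (by omega) hb
        rw [e1, e2, e3, e4]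
        simp [switchCost]
      · rw [hr'eq t (by omega), hr'eq (t + 1) (by omega)]; ring
  rw [Finset.sum_sub_distrib] at hslot hswitch
  unfold totalCost at hle
  -- bound each term of the gap sum
  have hbound : ((Finset.Icc n m).card : ℝ) * ((cH - cL) - (kH - kL)) ≤
      ∑ t ∈ Finset.Icc n m, ((cH - cL) - (min (x t) kH - min (x t) kL)) := by
    have heq : ((Finset.Icc n m).card : ℝ) * ((cH - cL) - (kH - kL))
        = ∑ _t ∈ Finset.Icc n m, ((cH - cL) - (kH - kL)) := by
      rw [Finset.sum_const, nsmul_eq_mul]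
    rw [heq]
    apply Finset.sum_le_sum
    intro t _
    have : min (x t) kH - min (x t) kL ≤ kH - kL := by
      rcases le_total (x t) kL with h | h
      · rw [min_eq_left h, min_eq_left (h.trans hk.le)]; linarith
      · rw [min_eq_right h]
        have := min_le_right (x t) kH
        linarith
    linarith
  have hcard : ((Finset.Icc n m).card : ℝ) = ((m - n + 1 : ℕ) : ℝ) := by
    rw [Nat.card_Icc]; congr 1; omega
  rw [div_le_iff₀ hd]
  rw [hcard] at hbound
  nlinarith [hbound, hslot, hswitch, hle]
end
end

section
/- (Minimum sojourn of OPT-OFF in L) If the offline optimal policy switches to state L at the end of slot n−1 and switches back to state H at the end of slot m (i.e., r*(n−1) = H, r*(t) = L for n ≤ t ≤ m, r*(m+1) = H), then m − n + 1 ≥ W / (c_H − c_L); that is, once OPT-OFF switches to L, it remains in L for at least W/(c_H − c_L) slots. -/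
open Finset

noncomputable section

/-- minimum sojourn of OPT-OFF in L: if the offline optimal policy
switches to `L` at the end of slot `n−1` and back to `H` at the end of slot `m`, then it
stays in `L` for at least `W/(cH − cL)` slots, i.e. `m − n + 1 ≥ W/(cH − cL)`. -/
theorem optoff_min_sojourn_L
    (cH cL kH kL WLH WHL : ℝ)
    (hcL : 0 < cL) (hc : cL < cH) (hkL : 0 < kL) (hk : kL < kH)
    (hWLH : 0 < WLH) (hWHL : 0 < WHL) (hkc : cH - cL < kH - kL)
    (x : ℕ → ℝ) (hx : ∀ t, 0 ≤ x t) (T : ℕ)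
    (rstar : ℕ → Bool) (hOpt : IsOptOff cH cL kH kL WLH WHL x T rstar)
    (n m : ℕ) (hn : 2 ≤ n) (hnm : n ≤ m) (hmT : m + 1 ≤ T)
    (h1 : rstar (n - 1) = true)
    (h2 : ∀ t, n ≤ t → t ≤ m → rstar t = false)
    (h3 : rstar (m + 1) = true) :
    (WLH + WHL) / (cH - cL) ≤ ((m - n + 1 : ℕ) : ℝ) := by
  classical
  have hdc : (0:ℝ) < cH - cL := sub_pos.mpr hc
  set r' : ℕ → Bool := fun t => if n ≤ t ∧ t ≤ m then true else rstar t with hr'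
  have hr'S : ∀ t, n ≤ t → t ≤ m → r' t = true := by
    intro t h h'; simp [hr', h, h']
  have hr'O : ∀ t, ¬(n ≤ t ∧ t ≤ m) → r' t = rstar t := by
    intro t h; simp [hr', h]
  have hsub : Finset.Icc n m ⊆ Finset.Icc 1 T := by
    intro t ht; simp only [Finset.mem_Icc] at *; omega
  -- slot cost difference
  have hslot :
      (∑ t ∈ Finset.Icc 1 T, slotCost cH cL kH kL x r' t)
        - (∑ t ∈ Finset.Icc 1 T, slotCost cH cL kH kL x rstar t)
      = ((m - n + 1 : ℕ) : ℝ) * (cH - cL) - servedGap kH kL x n m := by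
    rw [← Finset.sum_sub_distrib]
    have hcong : ∀ t ∈ Finset.Icc 1 T,
        slotCost cH cL kH kL x r' t - slotCost cH cL kH kL x rstar t
        = if t ∈ Finset.Icc n m then (cH - cL) - (min (x t) kH - min (x t) kL) else 0 := by
      intro t _
      by_cases h : t ∈ Finset.Icc n m
      · rw [if_pos h]
        simp only [Finset.mem_Icc] at h
        rw [slotCost, slotCost, hr'S t h.1 h.2, h2 t h.1 h.2]
        simp [rentCost, capac]; ring
      · rw [if_neg h]
        simp only [Finset.mem_Icc, not_and_or, not_le] at h
        have : r' t = rstar t := by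
          apply hr'O; simp only [not_and_or, not_le]; exact h
        rw [slotCost, slotCost, this]; ring
    rw [Finset.sum_congr rfl hcong, Finset.sum_ite_mem,
      Finset.inter_eq_right.mpr hsub, Finset.sum_sub_distrib, Finset.sum_const,
      Nat.card_Icc, servedGap]
    have : ((m + 1 - n : ℕ) : ℝ) = ((m - n + 1 : ℕ) : ℝ) := by
      congr 1; omega
    rw [nsmul_eq_mul, this]
  -- switch cost difference
  have hn1mem : n - 1 ∈ Finset.Icc 1 (T - 1) := by
    simp only [Finset.mem_Icc]; omega
  have hmmem : m ∈ Finset.Icc 1 (T - 1) := by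
    simp only [Finset.mem_Icc]; omega
  have hne : n - 1 ≠ m := by omega
  have hn1 : n - 1 + 1 = n := by omega
  have hswt : ∀ t ∈ Finset.Icc 1 (T - 1),
      switchCost WLH WHL (r' t) (r' (t + 1)) - switchCost WLH WHL (rstar t) (rstar (t + 1))
      = (if t = n - 1 then -WHL else 0) + (if t = m then -WLH else 0) := by
    intro t ht
    simp only [Finset.mem_Icc] at ht
    by_cases htn : t = n - 1
    · subst htn
      rw [if_pos rfl, if_neg hne, hn1]
      have e1 : r' (n - 1) = rstar (n - 1) := hr'O _ (by omega)
      have e2 : r' n = true := hr'S n le_rfl hnm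
      have e3 : rstar n = false := h2 n le_rfl hnm
      rw [e1, e2, e3, h1]
      simp [switchCost]
    · rw [if_neg htn]
      by_cases htm : t = m
      · rw [if_pos htm]
        subst htm
        have e1 : r' t = true := hr'S t hnm le_rfl
        have e2 : r' (t + 1) = rstar (t + 1) := hr'O _ (by omega)
        have e3 : rstar t = false := h2 t hnm le_rfl
        rw [e1, e2, e3, h3]
        simp [switchCost]
      · rw [if_neg htm]
        by_cases hin : n ≤ t ∧ t ≤ m
        · have ht1 : t + 1 ≤ m := by omega
          have e1 : r' t = true := hr'S t hin.1 hin.2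
          have e2 : r' (t + 1) = true := hr'S (t + 1) (by omega) ht1
          have e3 : rstar t = false := h2 t hin.1 hin.2
          have e4 : rstar (t + 1) = false := h2 (t + 1) (by omega) ht1
          rw [e1, e2, e3, e4]
          simp [switchCost]
        · have e1 : r' t = rstar t := hr'O t hin
          have e2 : r' (t + 1) = rstar (t + 1) := by
            apply hr'O; omega
          rw [e1, e2]; ring
  have hsw :
      (∑ t ∈ Finset.Icc 1 (T - 1), switchCost WLH WHL (r' t) (r' (t + 1)))
        - (∑ t ∈ Finset.Icc 1 (T - 1), switchCost WLH WHL (rstar t) (rstar (t + 1)))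
      = -WHL - WLH := by
    rw [← Finset.sum_sub_distrib, Finset.sum_congr rfl hswt, Finset.sum_add_distrib,
      Finset.sum_ite_eq' _ (n - 1) (fun _ => -WHL),
      Finset.sum_ite_eq' _ m (fun _ => -WLH),
      if_pos hn1mem, if_pos hmmem]
    ring
  -- combine
  have hgap : 0 ≤ servedGap kH kL x n m := by
    apply Finset.sum_nonneg
    intro l _
    have := min_le_min (le_refl (x l)) hk.le
    linarith
  have hopt := hOpt r'
  rw [totalCost, totalCost] at hopt
  have hkey : WLH + WHL ≤ ((m - n + 1 : ℕ) : ℝ) * (cH - cL) := by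
    have := hgap
    nlinarith [hslot, hsw, hopt]
  rw [div_le_iff₀ hdc]
  linarith
end
end

section
/- (Upper bound on served-request gap over a BLTN L-interval) Suppose BLTN satisfies r^BLTN(n−1) = H, r^BLTN(t) = L for all n ≤ t ≤ m, and r^BLTN(m+1) = H. Then for every n' with n ≤ n' < m, Σ_{l=n'}^m (x̄_{l,H} − x̄_{l,L}) < (m − n')(c_H − c_L) + W + (κ_H − κ_L). -/
open Finset

noncomputable section

open scoped Classical in
lemma bltn_succ_eq (cH cL kH kL W : ℝ) (x : ℕ → ℝ) (t : ℕ) :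
    bltn cH cL kH kL W x (t + 1) =
    (if (bltn cH cL kH kL W x t).1 then
      if ∃ τ, (bltn cH cL kH kL W x t).2 < τ ∧ τ ≤ t ∧
          servedGap kH kL x τ t ≤ ((t - τ + 1 : ℕ) : ℝ) * (cH - cL) - W then
        (false, t)
      else (true, (bltn cH cL kH kL W x t).2)
    else
      if ∃ τ, (bltn cH cL kH kL W x t).2 < τ ∧ τ ≤ t ∧
          ((t - τ + 1 : ℕ) : ℝ) * (cH - cL) + W ≤ servedGap kH kL x τ t then
        (true, t)
      else (false, (bltn cH cL kH kL W x t).2)) := by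
  rw [bltn]

/-- upper bound on the served-request gap over a BLTN L-interval:
if BLTN is in `H` in slot `n−1`, in `L` in slots `n, …, m`, and in `H` in slot `m+1`,
then for every `n'` with `n ≤ n' < m`,
`Σ_{l=n'}^m (x̄_{l,H} − x̄_{l,L}) < (m − n')(cH − cL) + W + (κH − κL)`. -/
theorem bltn_L_interval_gap_upper
    (cH cL kH kL WLH WHL : ℝ)
    (hcL : 0 < cL) (hc : cL < cH) (hkL : 0 < kL) (hk : kL < kH)
    (hWLH : 0 < WLH) (hWHL : 0 < WHL) (hkc : cH - cL < kH - kL)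
    (x : ℕ → ℝ) (hx : ∀ t, 0 ≤ x t)
    (n m : ℕ) (hn : 2 ≤ n) (hnm : n ≤ m)
    (h1 : rBLTN cH cL kH kL (WLH + WHL) x (n - 1) = true)
    (h2 : ∀ t, n ≤ t → t ≤ m → rBLTN cH cL kH kL (WLH + WHL) x t = false)
    (h3 : rBLTN cH cL kH kL (WLH + WHL) x (m + 1) = true) :
    ∀ n', n ≤ n' → n' < m →
      servedGap kH kL x n' m <
        ((m - n' : ℕ) : ℝ) * (cH - cL) + (WLH + WHL) + (kH - kL) := by
  intro n' hn' hn'm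
  set W := WLH + WHL with hW
  have key : ∀ t, n ≤ t → t ≤ m → bltn cH cL kH kL W x t = (false, n - 1) := by
    intro t
    induction t with
    | zero => intro h _; omega
    | succ t ih =>
      intro ht1 ht2
      rcases eq_or_lt_of_le ht1 with heq | hlt
      · have htn : t = n - 1 := by omega
        have hpt : (bltn cH cL kH kL W x t).1 = true := by
          rw [htn]; exact h1
        have hf : (bltn cH cL kH kL W x (t+1)).1 = false := h2 (t+1) ht1 ht2
        rw [bltn_succ_eq] at hf ⊢
        rw [if_pos hpt] at hf ⊢
        by_cases hcond : ∃ τ, (bltn cH cL kH kL W x t).2 < τ ∧ τ ≤ t ∧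
            servedGap kH kL x τ t ≤ ((t - τ + 1 : ℕ) : ℝ) * (cH - cL) - W
        · rw [if_pos hcond]; rw [htn]
        · rw [if_neg hcond] at hf; simp at hf
      · have ht : n ≤ t := by omega
        have hP := ih ht (by omega)
        have hf : (bltn cH cL kH kL W x (t+1)).1 = false := h2 (t+1) (by omega) ht2
        rw [bltn_succ_eq] at hf ⊢
        rw [hP] at hf ⊢
        simp only [Bool.false_eq_true, if_false] at hf ⊢
        by_cases hcond : ∃ τ, ((false, n-1) : Bool × ℕ).2 < τ ∧ τ ≤ t ∧
            ((t - τ + 1 : ℕ) : ℝ) * (cH - cL) + W ≤ servedGap kH kL x τ t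
        · rw [if_pos hcond] at hf; simp at hf
        · rw [if_neg hcond]
  -- t_switch at slot m-1 is n-1; no switch at end of slot m-1
  have hm1 : n ≤ m - 1 := by omega
  have hkeym : bltn cH cL kH kL W x (m - 1 + 1) = (false, n - 1) := by
    have : m - 1 + 1 = m := by omega
    rw [this]; exact key m hnm le_rfl
  have hkeym1 : bltn cH cL kH kL W x (m - 1) = (false, n - 1) :=
    key (m - 1) hm1 (by omega)
  have hnoswitch : ¬ ∃ τ, ((false, n-1) : Bool × ℕ).2 < τ ∧ τ ≤ m - 1 ∧
      ((m - 1 - τ + 1 : ℕ) : ℝ) * (cH - cL) + W ≤ servedGap kH kL x τ (m - 1) := by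
    intro hcond
    rw [bltn_succ_eq, hkeym1] at hkeym
    simp only [Bool.false_eq_true, if_false] at hkeym
    rw [if_pos hcond] at hkeym
    simp at hkeym
  push_neg at hnoswitch
  have hgap1 : servedGap kH kL x n' (m - 1) <
      ((m - 1 - n' + 1 : ℕ) : ℝ) * (cH - cL) + W :=
    hnoswitch n' (by simp; omega) (by omega)
  have hcastnat : (m - 1 - n' + 1 : ℕ) = m - n' := by omega
  rw [hcastnat] at hgap1
  have hdecomp : servedGap kH kL x n' m =
      servedGap kH kL x n' (m - 1) + (min (x m) kH - min (x m) kL) := by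
    unfold servedGap
    have : Finset.Icc n' m = insert m (Finset.Icc n' (m - 1)) := by
      ext a
      simp only [Finset.mem_insert, Finset.mem_Icc]
      omega
    rw [this, Finset.sum_insert (by simp; omega)]
    ring
  have hlast : min (x m) kH - min (x m) kL ≤ kH - kL := by
    rcases le_total (x m) kL with h | h
    · rw [min_eq_left h, min_eq_left (le_trans h hk.le)]
      linarith
    · rw [min_eq_right h]
      have : min (x m) kH ≤ kH := min_le_right _ _
      linarith
  rw [hdecomp]
  linarith
end
end

section
/- (Lower bound on served-request gap between OPT-OFF's and BLTN's switches to L) Suppose the offline optimal policy satisfies r*(n−1) = H and r*(n) = L, while BLTN satisfies r^BLTN(t) = H for all n−1 ≤ t ≤ m and r^BLTN(m+1) = L. Then for every n' with n ≤ n' < m, Σ_{l=n'}^m (x̄_{l,H} − x̄_{l,L}) ≥ (m − n')(c_H − c_L) − W. -/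
open Finset

noncomputable section

/-- lower bound on the served-request gap between OPT-OFF's and BLTN's
switches to L: if the offline optimal policy switches to `L` at the end of slot `n−1`
while BLTN stays in `H` during slots `n−1, …, m` and is in `L` in slot `m+1`, then for
every `n'` with `n ≤ n' < m`,
`Σ_{l=n'}^m (x̄_{l,H} − x̄_{l,L}) ≥ (m − n')(cH − cL) − W`. -/
theorem gap_lower_between_optoff_and_bltn_switch
    (cH cL kH kL WLH WHL : ℝ)
    (hcL : 0 < cL) (hc : cL < cH) (hkL : 0 < kL) (hk : kL < kH)
    (hWLH : 0 < WLH) (hWHL : 0 < WHL) (hkc : cH - cL < kH - kL)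
    (x : ℕ → ℝ) (hx : ∀ t, 0 ≤ x t) (T : ℕ)
    (rstar : ℕ → Bool) (hOpt : IsOptOff cH cL kH kL WLH WHL x T rstar)
    (n m : ℕ) (hn : 2 ≤ n) (hnm : n ≤ m) (hmT : m + 1 ≤ T)
    (h1 : rstar (n - 1) = true) (h2 : rstar n = false)
    (hB : ∀ t, n - 1 ≤ t → t ≤ m → rBLTN cH cL kH kL (WLH + WHL) x t = true)
    (hB' : rBLTN cH cL kH kL (WLH + WHL) x (m + 1) = false) :
    ∀ n', n ≤ n' → n' < m →
      ((m - n' : ℕ) : ℝ) * (cH - cL) - (WLH + WHL) ≤ servedGap kH kL x n' m := by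
  classical
  intro n' hn1 hn2
  set W : ℝ := WLH + WHL with hWdef
  -- weak bound on t_switch
  have hweak : ∀ t, (bltn cH cL kH kL W x t).2 ≤ t := by
    intro t
    induction t with
    | zero => simp [bltn]
    | succ t ih =>
      rw [bltn]
      split
      · split
        · simp
        · exact Nat.le_succ_of_le ih
      · split
        · simp
        · exact Nat.le_succ_of_le ih
  have hstrong : ∀ t, (bltn cH cL kH kL W x (t + 1)).2 ≤ t := by
    intro t
    rw [bltn]
    split
    · split
      · simp
      · exact hweak t
    · split
      · simp
      · exact hweak t
  -- t_switch stays ≤ n - 2 during the H run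
  have hBsw : ∀ t, n - 1 ≤ t → t ≤ m → (bltn cH cL kH kL W x t).2 ≤ n - 2 := by
    intro t ht
    induction t with
    | zero => omega
    | succ t ih =>
      intro htm
      rcases Nat.lt_or_ge t (n - 1) with hlt | hge
      · -- t + 1 = n - 1
        have : t = n - 2 := by omega
        subst this
        exact hstrong (n - 2)
      · -- inductive step: state true at t and t+1, so no switch
        have h1t : rBLTN cH cL kH kL W x t = true := hB t hge (by omega)
        have h2t : rBLTN cH cL kH kL W x (t + 1) = true := hB (t + 1) (by omega) htm
        have ihv := ih hge (by omega)
        unfold rBLTN at h1t h2t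
        rw [bltn] at h2t ⊢
        rw [if_pos h1t] at h2t ⊢
        split at h2t
        · simp at h2t
        · rename_i hcond
          rw [if_neg hcond]
          exact ihv
  -- state true at m-1 and m, no switch at end of slot m-1
  have hm1 : n - 1 ≤ m - 1 := by omega
  have hm2 : m - 1 ≤ m := by omega
  have hmeq : m - 1 + 1 = m := by omega
  have h1t : rBLTN cH cL kH kL W x (m - 1) = true := hB (m - 1) hm1 hm2
  have h2t : rBLTN cH cL kH kL W x m = true := hB m (by omega) le_rfl
  have hsw := hBsw (m - 1) hm1 hm2
  unfold rBLTN at h1t h2t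
  rw [← hmeq, bltn, if_pos h1t] at h2t
  have hcond : ¬ ∃ τ, (bltn cH cL kH kL W x (m - 1)).2 < τ ∧ τ ≤ m - 1 ∧
      servedGap kH kL x τ (m - 1) ≤ ((m - 1 - τ + 1 : ℕ) : ℝ) * (cH - cL) - W := by
    intro hc'
    rw [if_pos hc'] at h2t
    simp at h2t
  push_neg at hcond
  have hkey := hcond n' (by omega) (by omega)
  have hcast : (m - 1 - n' + 1 : ℕ) = m - n' := by omega
  rw [hcast] at hkey
  -- extend the sum from m-1 to m
  have hsum : servedGap kH kL x n' m
      = servedGap kH kL x n' (m - 1) + (min (x m) kH - min (x m) kL) := by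
    unfold servedGap
    rw [← hmeq, Finset.sum_Icc_succ_top (by omega), Nat.add_sub_cancel]
  have hpos : 0 ≤ min (x m) kH - min (x m) kL :=
    sub_nonneg.mpr (min_le_min le_rfl hk.le)
  rw [hsum]
  nlinarith [hkey, hpos]
end
end

section
/- (BLTN switches to L during OPT-OFF's L-interval) Suppose the offline optimal policy satisfies r*(n−1) = H, r*(t) = L for all n ≤ t ≤ m, and r*(m+1) = H, and suppose r^BLTN(n−1) = H. Then BLTN switches to state L by the end of slot m, and r^BLTN(m+1) = L. -/
open Finset

noncomputable section

lemma bltn_succ_TP (cH cL kH kL W : ℝ) (x : ℕ → ℝ) (t : ℕ)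
    (h : (bltn cH cL kH kL W x t).1 = true)
    (hc : ∃ τ, (bltn cH cL kH kL W x t).2 < τ ∧ τ ≤ t ∧
      servedGap kH kL x τ t ≤ ((t - τ + 1 : ℕ) : ℝ) * (cH - cL) - W) :
    bltn cH cL kH kL W x (t+1) = (false, t) := by
  simp only [bltn]
  rw [if_pos h, if_pos hc]

lemma bltn_succ_TN (cH cL kH kL W : ℝ) (x : ℕ → ℝ) (t : ℕ)
    (h : (bltn cH cL kH kL W x t).1 = true)
    (hc : ¬ ∃ τ, (bltn cH cL kH kL W x t).2 < τ ∧ τ ≤ t ∧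
      servedGap kH kL x τ t ≤ ((t - τ + 1 : ℕ) : ℝ) * (cH - cL) - W) :
    bltn cH cL kH kL W x (t+1) = (true, (bltn cH cL kH kL W x t).2) := by
  simp only [bltn]
  rw [if_pos h, if_neg hc]

lemma bltn_succ_FP (cH cL kH kL W : ℝ) (x : ℕ → ℝ) (t : ℕ)
    (h : (bltn cH cL kH kL W x t).1 = false)
    (hc : ∃ τ, (bltn cH cL kH kL W x t).2 < τ ∧ τ ≤ t ∧
      ((t - τ + 1 : ℕ) : ℝ) * (cH - cL) + W ≤ servedGap kH kL x τ t) :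
    bltn cH cL kH kL W x (t+1) = (true, t) := by
  simp only [bltn]
  rw [if_neg (by simp [h]), if_pos hc]

lemma bltn_succ_FN (cH cL kH kL W : ℝ) (x : ℕ → ℝ) (t : ℕ)
    (h : (bltn cH cL kH kL W x t).1 = false)
    (hc : ¬ ∃ τ, (bltn cH cL kH kL W x t).2 < τ ∧ τ ≤ t ∧
      ((t - τ + 1 : ℕ) : ℝ) * (cH - cL) + W ≤ servedGap kH kL x τ t) :
    bltn cH cL kH kL W x (t+1) = (false, (bltn cH cL kH kL W x t).2) := by
  simp only [bltn]
  rw [if_neg (by simp [h]), if_neg hc]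
lemma servedGap_split (kH kL : ℝ) (x : ℕ → ℝ) (a b c : ℕ) (ha : 1 ≤ a) (h1 : a ≤ b) (h2 : b ≤ c) :
    servedGap kH kL x a b + servedGap kH kL x (b+1) c = servedGap kH kL x a c := by
  unfold servedGap
  have e1 : Icc a b = Ioc (a-1) b := by rw [← Finset.Icc_add_one_left_eq_Ioc]; congr 1; omega
  have e2 : Icc (b+1) c = Ioc b c := Finset.Icc_add_one_left_eq_Ioc b c
  have e3 : Icc a c = Ioc (a-1) c := by rw [← Finset.Icc_add_one_left_eq_Ioc]; congr 1; omega
  rw [e1, e2, e3]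
  exact Finset.sum_Ioc_consecutive _ (by omega) h2

/-- The key optimality bound: for `n ≤ τ ≤ m`,
`servedGap τ m ≤ (m-τ+1)(cH-cL) - (W if τ = n else 0)`. -/
lemma gap_bound (cH cL kH kL WLH WHL : ℝ)
    (x : ℕ → ℝ) (T : ℕ)
    (rstar : ℕ → Bool) (hOpt : IsOptOff cH cL kH kL WLH WHL x T rstar)
    (n m : ℕ) (hn : 2 ≤ n) (hnm : n ≤ m) (hmT : m + 1 ≤ T)
    (h1 : rstar (n - 1) = true)
    (h2 : ∀ t, n ≤ t → t ≤ m → rstar t = false)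
    (h3 : rstar (m + 1) = true)
    (τ : ℕ) (hτ1 : n ≤ τ) (hτ2 : τ ≤ m) :
    servedGap kH kL x τ m ≤ ((m - τ + 1 : ℕ) : ℝ) * (cH - cL)
      - (if τ = n then WLH + WHL else 0) := by
  set r' : ℕ → Bool := fun t => if τ ≤ t ∧ t ≤ m then true else rstar t with hr'
  have hr'in : ∀ t, τ ≤ t → t ≤ m → r' t = true := by
    intro t h h'; simp [hr', h, h']
  have hr'out : ∀ t, t < τ ∨ m < t → r' t = rstar t := by
    intro t h; simp only [hr']; rw [if_neg]; omega
  have hO := hOpt r'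
  unfold totalCost at hO
  -- slot sums
  have hslot : (∑ t ∈ Icc 1 T, slotCost cH cL kH kL x r' t)
      = (∑ t ∈ Icc 1 T, slotCost cH cL kH kL x rstar t)
        + (((m - τ + 1 : ℕ) : ℝ) * (cH - cL) - servedGap kH kL x τ m) := by
    have hpt : ∀ t ∈ Icc 1 T, slotCost cH cL kH kL x r' t
        = slotCost cH cL kH kL x rstar t
          + (if t ∈ Icc τ m then ((cH - cL) - (min (x t) kH - min (x t) kL)) else 0) := by
      intro t ht
      by_cases hmem : t ∈ Icc τ m
      · rw [if_pos hmem]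
        rw [mem_Icc] at hmem
        have hrt : rstar t = false := h2 t (by omega) hmem.2
        have : r' t = true := hr'in t hmem.1 hmem.2
        simp [slotCost, rentCost, capac, this, hrt]
        ring
      · rw [if_neg hmem]
        rw [mem_Icc] at hmem
        have hrr := hr'out t (by omega)
        simp [slotCost, hrr]
    rw [Finset.sum_congr rfl hpt, Finset.sum_add_distrib]
    congr 1
    rw [Finset.sum_ite_mem, Finset.inter_eq_right.mpr (by
      intro t ht; rw [mem_Icc] at *; omega)]
    rw [Finset.sum_sub_distrib, Finset.sum_const, Nat.card_Icc]
    unfold servedGap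
    have : m + 1 - τ = m - τ + 1 := by omega
    rw [this]
    simp [nsmul_eq_mul]
  -- switch sums
  have hmm1 : m ∈ Icc 1 (T-1) := by rw [mem_Icc]; omega
  have hτ1m : τ - 1 ∈ Icc 1 (T-1) := by rw [mem_Icc]; omega
  have hne : τ - 1 ≠ m := by omega
  have hswitch : (∑ t ∈ Icc 1 (T-1), switchCost WLH WHL (r' t) (r' (t + 1)))
      = (∑ t ∈ Icc 1 (T-1), switchCost WLH WHL (rstar t) (rstar (t + 1)))
        + ((if τ = n then -WHL else WLH) + -WLH) := by
    have hpt : ∀ t ∈ Icc 1 (T-1), switchCost WLH WHL (r' t) (r' (t + 1))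
        = switchCost WLH WHL (rstar t) (rstar (t + 1))
          + ((if t = τ - 1 then (if τ = n then -WHL else WLH) else 0)
             + (if t = m then -WLH else 0)) := by
      intro t ht
      rw [mem_Icc] at ht
      rcases eq_or_ne t (τ - 1) with rfl | hA
      · rw [if_pos rfl, if_neg hne]
        have e1 : r' (τ - 1) = rstar (τ - 1) := hr'out _ (by omega)
        have e2 : τ - 1 + 1 = τ := by omega
        have e3 : r' τ = true := hr'in τ le_rfl hτ2
        have e4 : rstar τ = false := h2 τ hτ1 hτ2
        rw [e1, e2, e3, e4]
        rcases eq_or_ne τ n with rfl | hτn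
        · rw [h1]
          simp [switchCost]
        · have : rstar (τ - 1) = false := h2 _ (by omega) (by omega)
          rw [this, if_neg hτn]; simp [switchCost]
      · rw [if_neg hA]
        rcases eq_or_ne t m with hBm | hBm
        · rw [if_pos hBm]
          have e3 : r' t = true := by rw [hBm]; exact hr'in m hτ2 le_rfl
          have e4 : rstar t = false := by rw [hBm]; exact h2 m hnm le_rfl
          have e5 : r' (t+1) = rstar (t+1) := hr'out _ (by omega)
          have e6 : rstar (t+1) = true := by rw [hBm]; exact h3
          rw [e3, e4, e5, e6]
          simp [switchCost]
        · rw [if_neg hBm, add_zero, add_zero]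
          by_cases hin : τ ≤ t ∧ t ≤ m - 1
          · have e3 : r' t = true := hr'in t hin.1 (by omega)
            have e4 : r' (t+1) = true := hr'in (t+1) (by omega) (by omega)
            have e5 : rstar t = false := h2 t (by omega) (by omega)
            have e6 : rstar (t+1) = false := h2 (t+1) (by omega) (by omega)
            rw [e3, e4, e5, e6]
            simp [switchCost]
          · have ho : t < τ - 1 ∨ m < t := by omega
            have e1 : r' t = rstar t := hr'out t (by omega)
            have e2 : r' (t+1) = rstar (t+1) := hr'out (t+1) (by omega)
            rw [e1, e2]
    rw [Finset.sum_congr rfl hpt, Finset.sum_add_distrib]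
    congr 1
    rw [Finset.sum_add_distrib, Finset.sum_ite_eq' (Icc 1 (T-1)) (τ-1),
      Finset.sum_ite_eq' (Icc 1 (T-1)) m, if_pos hτ1m, if_pos hmm1]
  rw [hslot, hswitch] at hO
  rcases eq_or_ne τ n with rfl | hτn
  · rw [if_pos rfl] at hO ⊢; linarith
  · rw [if_neg hτn] at hO ⊢; linarith

lemma bltn_snd_lt (cH cL kH kL W : ℝ) (x : ℕ → ℝ) : ∀ t, 0 < t → (bltn cH cL kH kL W x t).2 < t := by
  intro t
  induction t with
  | zero => omega
  | succ s ih =>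
    intro _
    simp only [bltn]
    split
    · split
      · omega
      · dsimp only
        rcases Nat.eq_zero_or_pos s with h | h
        · simp [h, bltn]
        · exact Nat.lt_succ_of_lt (ih h)
    · split
      · omega
      · dsimp only
        rcases Nat.eq_zero_or_pos s with h | h
        · simp [h, bltn]
        · exact Nat.lt_succ_of_lt (ih h)



/-- BLTN switches to L during OPT-OFF's L-interval: if the offline
optimal policy is in `H` in slot `n−1`, in `L` in slots `n, …, m`, and in `H` in slot
`m+1`, and BLTN is in `H` in slot `n−1`, then BLTN switches to `L` at the end of some
slot `t ≤ m`, and is in state `L` in slot `m+1`. -/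
theorem bltn_switches_to_L_in_optoff_L_interval
    (cH cL kH kL WLH WHL : ℝ)
    (hcL : 0 < cL) (hc : cL < cH) (hkL : 0 < kL) (hk : kL < kH)
    (hWLH : 0 < WLH) (hWHL : 0 < WHL) (hkc : cH - cL < kH - kL)
    (x : ℕ → ℝ) (hx : ∀ t, 0 ≤ x t) (T : ℕ)
    (rstar : ℕ → Bool) (hOpt : IsOptOff cH cL kH kL WLH WHL x T rstar)
    (n m : ℕ) (hn : 2 ≤ n) (hnm : n ≤ m) (hmT : m + 1 ≤ T)
    (h1 : rstar (n - 1) = true)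
    (h2 : ∀ t, n ≤ t → t ≤ m → rstar t = false)
    (h3 : rstar (m + 1) = true)
    (hB : rBLTN cH cL kH kL (WLH + WHL) x (n - 1) = true) :
    (∃ t, n - 1 ≤ t ∧ t ≤ m ∧
        rBLTN cH cL kH kL (WLH + WHL) x t = true ∧
        rBLTN cH cL kH kL (WLH + WHL) x (t + 1) = false) ∧
      rBLTN cH cL kH kL (WLH + WHL) x (m + 1) = false := by
  have hW : (0:ℝ) < WLH + WHL := by linarith
  have hgap := gap_bound cH cL kH kL WLH WHL x T rstar hOpt n m hn hnm hmT h1 h2 h3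
  have hO1 : servedGap kH kL x n m
      ≤ ((m - n + 1 : ℕ) : ℝ) * (cH - cL) - (WLH + WHL) := by
    have := hgap n le_rfl hnm
    rwa [if_pos rfl] at this
  have hO2 : ∀ τ, n ≤ τ → τ ≤ m →
      servedGap kH kL x τ m ≤ ((m - τ + 1 : ℕ) : ℝ) * (cH - cL) := by
    intro τ hτ1 hτ2
    have h := hgap τ hτ1 hτ2
    split_ifs at h with hh
    · linarith
    · linarith
  have hsnd := bltn_snd_lt cH cL kH kL (WLH + WHL) x
  simp only [rBLTN] at hB ⊢
  -- the invariant
  have key : ∀ t, n - 1 ≤ t → t ≤ m →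
      (((bltn cH cL kH kL (WLH + WHL) x t).1 = true ∧
        (bltn cH cL kH kL (WLH + WHL) x t).2 = (bltn cH cL kH kL (WLH + WHL) x (n-1)).2) ∨
      ((∃ t₀, n - 1 ≤ t₀ ∧ t₀ ≤ m ∧
          (bltn cH cL kH kL (WLH + WHL) x t₀).1 = true ∧
          (bltn cH cL kH kL (WLH + WHL) x (t₀+1)).1 = false) ∧
        (((bltn cH cL kH kL (WLH + WHL) x t).1 = false ∧
            n - 1 ≤ (bltn cH cL kH kL (WLH + WHL) x t).2) ∨
         ((bltn cH cL kH kL (WLH + WHL) x t).1 = true ∧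
            ∃ τ, n ≤ τ ∧ τ ≤ (bltn cH cL kH kL (WLH + WHL) x t).2 ∧
              (((bltn cH cL kH kL (WLH + WHL) x t).2 - τ + 1 : ℕ) : ℝ) * (cH - cL)
                + (WLH + WHL)
                ≤ servedGap kH kL x τ (bltn cH cL kH kL (WLH + WHL) x t).2)))) := by
    intro t
    induction t with
    | zero => intro h h'; omega
    | succ s ih =>
      intro hl hr
      rcases Nat.lt_or_ge s (n - 1) with hs | hs
      · -- base case : s + 1 = n - 1
        have hsn : s + 1 = n - 1 := by omega
        left
        constructor
        · rw [hsn]; exact hB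
        · rw [hsn]
      · -- inductive step
        rcases ih hs (by omega) with ⟨hi1, hi2⟩ | ⟨hrec, hcase⟩
        · -- case (i) : still in original H
          by_cases hc : ∃ τ, (bltn cH cL kH kL (WLH + WHL) x s).2 < τ ∧ τ ≤ s ∧
              servedGap kH kL x τ s
                ≤ ((s - τ + 1 : ℕ) : ℝ) * (cH - cL) - (WLH + WHL)
          · have hb := bltn_succ_TP cH cL kH kL (WLH + WHL) x s hi1 hc
            right
            refine ⟨⟨s, by omega, by omega, hi1, by rw [hb]⟩, Or.inl ?_⟩
            rw [hb]
            exact ⟨rfl, by omega⟩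
          · have hb := bltn_succ_TN cH cL kH kL (WLH + WHL) x s hi1 hc
            left
            rw [hb]
            exact ⟨rfl, hi2⟩
        · rcases hcase with ⟨hf, hge⟩ | ⟨ht, τ, hτ1, hτ2, hcert⟩
          · -- case (ii) : in L with t_switch ≥ n-1
            by_cases hc : ∃ τ, (bltn cH cL kH kL (WLH + WHL) x s).2 < τ ∧ τ ≤ s ∧
                ((s - τ + 1 : ℕ) : ℝ) * (cH - cL) + (WLH + WHL)
                  ≤ servedGap kH kL x τ s
            · obtain ⟨τ, hτa, hτb, hτc⟩ := hc
              have hb := bltn_succ_FP cH cL kH kL (WLH + WHL) x s hf ⟨τ, hτa, hτb, hτc⟩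
              right
              refine ⟨hrec, Or.inr ?_⟩
              rw [hb]
              exact ⟨rfl, τ, by omega, hτb, hτc⟩
            · have hb := bltn_succ_FN cH cL kH kL (WLH + WHL) x s hf hc
              right
              refine ⟨hrec, Or.inl ?_⟩
              rw [hb]
              exact ⟨rfl, hge⟩
          · -- case (iii) : back in H after an up-switch, with certificate
            by_cases hc : ∃ τ, (bltn cH cL kH kL (WLH + WHL) x s).2 < τ ∧ τ ≤ s ∧
                servedGap kH kL x τ s
                  ≤ ((s - τ + 1 : ℕ) : ℝ) * (cH - cL) - (WLH + WHL)
            · have hb := bltn_succ_TP cH cL kH kL (WLH + WHL) x s ht hc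
              right
              refine ⟨hrec, Or.inl ?_⟩
              rw [hb]
              exact ⟨rfl, by omega⟩
            · have hb := bltn_succ_TN cH cL kH kL (WLH + WHL) x s ht hc
              right
              refine ⟨hrec, Or.inr ?_⟩
              rw [hb]
              exact ⟨rfl, τ, hτ1, hτ2, hcert⟩
  -- conclusion at slot m
  rcases key m (by omega) le_rfl with ⟨hm1, hm2⟩ | ⟨hrec, hcase⟩
  · -- still in original H at m : down condition fires with τ = n
    have hlt : (bltn cH cL kH kL (WLH + WHL) x m).2 < n := by
      have := hsnd (n-1) (by omega)
      omega
    have hc : ∃ τ, (bltn cH cL kH kL (WLH + WHL) x m).2 < τ ∧ τ ≤ m ∧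
        servedGap kH kL x τ m ≤ ((m - τ + 1 : ℕ) : ℝ) * (cH - cL) - (WLH + WHL) :=
      ⟨n, hlt, hnm, hO1⟩
    have hb := bltn_succ_TP cH cL kH kL (WLH + WHL) x m hm1 hc
    exact ⟨⟨m, by omega, le_rfl, hm1, by rw [hb]⟩, by rw [hb]⟩
  · rcases hcase with ⟨hf, hge⟩ | ⟨ht, τ, hτ1, hτ2, hcert⟩
    · -- in L at m : up condition cannot fire
      have hc : ¬ ∃ τ, (bltn cH cL kH kL (WLH + WHL) x m).2 < τ ∧ τ ≤ m ∧
          ((m - τ + 1 : ℕ) : ℝ) * (cH - cL) + (WLH + WHL)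
            ≤ servedGap kH kL x τ m := by
        rintro ⟨τ, hτa, hτb, hτc⟩
        have := hO2 τ (by omega) hτb
        linarith
      have hb := bltn_succ_FN cH cL kH kL (WLH + WHL) x m hf hc
      exact ⟨hrec, by rw [hb]⟩
    · -- in H at m after an up-switch : down condition fires with τ = t'+1
      set t' := (bltn cH cL kH kL (WLH + WHL) x m).2 with ht'
      have ht'm : t' < m := hsnd m (by omega)
      have hτt' : τ ≤ t' := hτ2
      have hsplit := servedGap_split kH kL x τ t' m (by omega) hτt' (by omega)
      have hb2 := hO2 τ hτ1 (by omega)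
      have hcast : (m - τ + 1 : ℕ) = (m - (t'+1) + 1) + (t' - τ + 1) := by omega
      have hbound : servedGap kH kL x (t'+1) m
          ≤ ((m - (t'+1) + 1 : ℕ) : ℝ) * (cH - cL) - (WLH + WHL) := by
        rw [hcast, Nat.cast_add] at hb2
        nlinarith [hcert, hsplit, hb2]
      have hc : ∃ τ', (bltn cH cL kH kL (WLH + WHL) x m).2 < τ' ∧ τ' ≤ m ∧
          servedGap kH kL x τ' m
            ≤ ((m - τ' + 1 : ℕ) : ℝ) * (cH - cL) - (WLH + WHL) :=
        ⟨t' + 1, by omega, by omega, hbound⟩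
      have hb := bltn_succ_TP cH cL kH kL (WLH + WHL) x m ht hc
      exact ⟨hrec, by rw [hb]⟩
end
end
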